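/- Let K be an ordered field extending ℝ, γ a positive element of K, and ν : 𝒫(X) → K a finitely additive, nonnegative set function. Define μ(E) = st(ν(E)/γ) ∈ [0,∞] (standard part, with value +∞ for positive infinite elements). Then μ is superadditive on countable partitions: if A = ⋃ₙ Aₙ with the Aₙ pairwise disjoint, then μ(A) ≥ Σₙ μ(Aₙ). -/

import Mathlib

/-!
If `ν(⋃ Aₙ)/γ` is infinite then `μ(⋃ Aₙ) = ∞` and there is nothing to prove. Otherwise every
ratio `ν(⋃_{i ∈ s} Aᵢ)/γ` over a finite `s` lies between `0` and this finite element, so all the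
ratios involved are finite, and on finite elements the standard part is additive and monotone.
Hence every partial sum `∑_{i ∈ s} μ(Aᵢ) = st(ν(⋃_{i ∈ s} Aᵢ)/γ)` is at most `μ(⋃ Aₙ)`, and so is
the series, being the supremum of its partial sums.
-/

open ArchimedeanClass MeasureTheory

section AdditiveSetFunction

variable {X M : Type*}

theorem isSetRing_univ : IsSetRing (Set.univ : Set (Set X)) :=
  ⟨trivial, fun _ _ _ _ ↦ trivial, fun _ _ _ _ ↦ trivial⟩

theorem apply_empty_of_additive [AddCancelCommMonoid M] {ν : Set X → M}
    (hadd : ∀ A B : Set X, A ∩ B = ∅ → ν (A ∪ B) = ν A + ν B) : ν ∅ = 0 := by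
  simpa using hadd ∅ ∅ (Set.empty_inter ∅)

theorem apply_biUnion_eq_sum_of_additive [AddCancelCommMonoid M] {ν : Set X → M}
    (hadd : ∀ A B : Set X, A ∩ B = ∅ → ν (A ∪ B) = ν A + ν B) {ι : Type*} {A : ι → Set X}
    (hA : Pairwise (Function.onFun Disjoint A)) (s : Finset ι) :
    ν (⋃ i ∈ s, A i) = ∑ i ∈ s, ν (A i) :=
  addContent_biUnion
    (m := isSetRing_univ.addContent_of_union ν (apply_empty_of_additive hadd)
      fun _ _ h ↦ hadd _ _ (Set.disjoint_iff_inter_eq_empty.1 h))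
    (fun _ _ ↦ trivial) (hA.set_pairwise _) trivial

theorem monotone_of_additive [AddCommMonoid M] [PartialOrder M] [IsOrderedAddMonoid M]
    {ν : Set X → M} (hadd : ∀ A B : Set X, A ∩ B = ∅ → ν (A ∪ B) = ν A + ν B)
    (hnonneg : ∀ A : Set X, 0 ≤ ν A) : Monotone ν := fun B C hBC ↦
  calc ν B ≤ ν B + ν (C \ B) := le_add_of_nonneg_right (hnonneg _)
    _ = ν C := by rw [← hadd _ _ (Set.inter_sdiff_self B C), Set.union_sdiff_cancel hBC]

end AdditiveSetFunction

namespace ArchimedeanClass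

variable {K : Type*} [Field K] [LinearOrder K] [IsStrictOrderedRing K] {f : ℝ →+*o K}
  {x y : K} {r s : ℝ}

theorem map_lt_of_forall_abs_sub_lt (h : ∀ n : ℕ, 0 < n → |x - f r| < 1 / (n : K))
    (hs : s < r) : f s < x := by
  obtain ⟨n, hn⟩ := exists_nat_one_div_lt (sub_pos.2 hs)
  have hfs : f s ≤ f r - 1 / ((n : K) + 1) := by
    simpa using f.monotone' (show s ≤ r - 1 / ((n : ℝ) + 1) by linarith)
  have hx := (abs_sub_lt_iff.1 (h (n + 1) n.succ_pos)).2
  push_cast at hx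
  linarith

theorem lt_map_of_forall_abs_sub_lt (h : ∀ n : ℕ, 0 < n → |x - f r| < 1 / (n : K))
    (hs : r < s) : x < f s := by
  have h' : ∀ n : ℕ, 0 < n → |-x - f (-r)| < 1 / (n : K) := fun n hn ↦ by
    rw [map_neg, sub_neg_eq_add, neg_add_eq_sub, abs_sub_comm]
    exact h n hn
  simpa using map_lt_of_forall_abs_sub_lt h' (neg_lt_neg hs)

theorem mk_nonneg_of_forall_abs_sub_lt (h : ∀ n : ℕ, 0 < n → |x - f r| < 1 / (n : K)) :
    0 ≤ mk x :=
  mk_nonneg_of_le_of_le_of_archimedean f (map_lt_of_forall_abs_sub_lt h (sub_one_lt r)).le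
    (lt_map_of_forall_abs_sub_lt h (lt_add_one r)).le

theorem stdPart_eq_of_forall_abs_sub_lt (h : ∀ n : ℕ, 0 < n → |x - f r| < 1 / (n : K)) :
    stdPart x = r :=
  stdPart_eq f (fun _ hs ↦ (map_lt_of_forall_abs_sub_lt h hs).le)
    fun _ hs ↦ (lt_map_of_forall_abs_sub_lt h hs).le

theorem mk_nonneg_of_nonneg_of_le (hx : 0 ≤ x) (hxy : x ≤ y) (hy : 0 ≤ mk y) : 0 ≤ mk x :=
  hy.trans (by simpa using min_le_mk_of_le_of_le hx hxy)

theorem mk_sum_nonneg {ι : Type*} {s : Finset ι} {x : ι → K} (h : ∀ i ∈ s, 0 ≤ mk (x i)) :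
    0 ≤ mk (∑ i ∈ s, x i) :=
  Finset.sum_induction x (fun y ↦ 0 ≤ mk y)
    (fun a b ha hb ↦ (le_min ha hb).trans (min_le_mk_add a b)) (by simp) h

theorem stdPart_sum {ι : Type*} {s : Finset ι} {x : ι → K} (h : ∀ i ∈ s, 0 ≤ mk (x i)) :
    stdPart (∑ i ∈ s, x i) = ∑ i ∈ s, stdPart (x i) := by
  classical
  induction s using Finset.induction_on with
  | empty => simp
  | insert i s hi ih =>
    have hs : ∀ j ∈ s, 0 ≤ mk (x j) := fun j hj ↦ h j (Finset.mem_insert_of_mem hj)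
    rw [Finset.sum_insert hi, Finset.sum_insert hi,
      stdPart_add (h i (Finset.mem_insert_self i s)) (mk_sum_nonneg hs), ih hs]

end ArchimedeanClass

/-- Unlike Mathlib's `stdPart`, which is `0` on infinite elements, this sends positive infinite
elements to `∞`. -/
def IsExtStdPart {K : Type*} [Field K] [LinearOrder K] (f : ℝ →+*o K) (x : K) (a : ENNReal) :
    Prop :=
  (∃ r : ℝ, 0 ≤ r ∧ a = ENNReal.ofReal r ∧ ∀ n : ℕ, 0 < n → |x - f r| < 1 / (n : K)) ∨
    (a = ⊤ ∧ ∀ n : ℕ, (n : K) < x)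

namespace IsExtStdPart

variable {K : Type*} [Field K] [LinearOrder K] [IsStrictOrderedRing K] {f : ℝ →+*o K}
  {x y : K} {a b : ENNReal}

theorem eq_ofReal_stdPart (h : IsExtStdPart f x a) (hx : 0 ≤ mk x) :
    a = ENNReal.ofReal (stdPart x) := by
  rcases h with ⟨r, -, rfl, hr⟩ | ⟨-, hx_inf⟩
  · rw [stdPart_eq_of_forall_abs_sub_lt hr]
  · obtain ⟨n, hn⟩ := exists_nat_gt_of_mk_nonneg hx
    exact absurd (hx_inf n) hn.not_gt

theorem eq_top (h : IsExtStdPart f x a) (hx : ¬0 ≤ mk x) : a = ⊤ := by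
  rcases h with ⟨r, -, -, hr⟩ | ⟨rfl, -⟩
  · exact absurd (mk_nonneg_of_forall_abs_sub_lt hr) hx
  · rfl

theorem sum_le {ι : Type*} {s : Finset ι} {x : ι → K} {a : ι → ENNReal}
    (hx : ∀ i ∈ s, IsExtStdPart f (x i) (a i)) (hy : IsExtStdPart f y b)
    (hx_nonneg : ∀ i ∈ s, 0 ≤ x i) (hle : ∑ i ∈ s, x i ≤ y) : ∑ i ∈ s, a i ≤ b := by
  by_cases hy_fin : 0 ≤ mk y
  swap
  · rw [hy.eq_top hy_fin]
    exact le_top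
  have hx_fin : ∀ i ∈ s, 0 ≤ mk (x i) := fun i hi ↦ mk_nonneg_of_nonneg_of_le (hx_nonneg i hi)
    ((Finset.single_le_sum hx_nonneg hi).trans hle) hy_fin
  have hsum_fin := mk_nonneg_of_nonneg_of_le (Finset.sum_nonneg hx_nonneg) hle hy_fin
  calc ∑ i ∈ s, a i = ∑ i ∈ s, ENNReal.ofReal (stdPart (x i)) :=
        Finset.sum_congr rfl fun i hi ↦ (hx i hi).eq_ofReal_stdPart (hx_fin i hi)
    _ = ENNReal.ofReal (stdPart (∑ i ∈ s, x i)) := by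
        rw [stdPart_sum hx_fin,
          ENNReal.ofReal_sum_of_nonneg fun i hi ↦ stdPart_nonneg (hx_nonneg i hi)]
    _ ≤ ENNReal.ofReal (stdPart y) :=
        ENNReal.ofReal_le_ofReal (stdPart_monotoneOn hsum_fin hy_fin hle)
    _ = b := (hy.eq_ofReal_stdPart hy_fin).symm

end IsExtStdPart

/-- The numerosity measure `μ(E) = st(ν(E)/γ)` associated to a nonnegative
finitely additive set function `ν` into an ordered field `K ⊇ ℝ` is
superadditive on countable partitions. -/
theorem stmt_9 (X : Type*) (K : Type*) [Field K] [LinearOrder K] [IsStrictOrderedRing K] (f : ℝ →+*o K)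
    (γ : K) (hγ : 0 < γ)
    (ν : Set X → K)
    (hadd : ∀ A B : Set X, A ∩ B = ∅ → ν (A ∪ B) = ν A + ν B)
    (hnonneg : ∀ A : Set X, 0 ≤ ν A)
    (μ : Set X → ENNReal)
    (hst : ∀ E : Set X,
      (∃ r : ℝ, 0 ≤ r ∧ μ E = ENNReal.ofReal r ∧
        ∀ n : ℕ, 0 < n → |ν E / γ - f r| < 1 / (n : K)) ∨
      (μ E = ⊤ ∧ ∀ n : ℕ, (n : K) < ν E / γ)) :
    ∀ A : ℕ → Set X, Pairwise (Function.onFun Disjoint A) →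
      (∑' n : ℕ, μ (A n)) ≤ μ (⋃ n : ℕ, A n) := by
  intro A hA
  refine ENNReal.summable.tsum_le_of_sum_le fun s ↦
    IsExtStdPart.sum_le (fun i _ ↦ hst (A i)) (hst _) (fun i _ ↦ div_nonneg (hnonneg _) hγ.le) ?_
  rw [← Finset.sum_div, ← apply_biUnion_eq_sum_of_additive hadd hA]
  exact div_le_div_of_nonneg_right
    (monotone_of_additive hadd hnonneg (Set.iUnion₂_subset_iUnion _ A)) hγ.le
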